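/- arXiv:2106.05739 — 2 statements merged into one kernel-verified Lean document; each statement's English description precedes it below -/
import Mathlib

section
/- If K = S^d and σ is an α-positive homogeneous activation with α a non-negative integer, then the F_1 and F_2 integral probability metrics are not distances on probability measures on K: there exist probability measures μ ≠ ν on S^d with ∫ σ(⟨x,θ⟩) dμ(x) = ∫ σ(⟨x,θ⟩) dν(x) for all θ ∈ S^d. -/
open MeasureTheory
open scoped RealInnerProductSpace

/-- `(t)_+^α`, the α-th power of the ReLU, with the threshold convention for `α = 0`. -/
noncomputable def reluPow (α : ℕ) (t : ℝ) : ℝ := if 0 < t then t ^ α else 0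

/-!
Put both measures on the great circle `φ ↦ (cos φ, sin φ, 0, …, 0)`: `μ` is the image of the
uniform distribution of `φ ∈ (0, 2π]`, and `ν` the image of its tilt by the density
`1 + cos (k φ)` with `k = α + 2`. They differ, since they integrate the Chebyshev polynomial
`T_k` of the first coordinate differently. The `σ`-moments at `θ` differ by
`(2π)⁻¹ ∫₀^{2π} σ(u cos φ + v sin φ) cos (k φ) dφ` with `(u, v) = (θ₀, θ₁)`. Folding this integral
by `φ ↦ φ + π`, which negates `u cos φ + v sin φ` and multiplies `cos (k φ)` by `(-1)^α`, replaces
`σ(t)` by `σ(t) + (-1)^α σ(-t) = (a + (-1)^α b) t^α` (valid for `t ≠ 0`, so almost everywhere),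
and `(u cos φ + v sin φ)^α` is a trigonometric polynomial of degree `α < k` and of the parity of
`k`, hence orthogonal to `cos (k φ)` already on `[0, π]`.
-/

open Real

/-- The α-positive homogeneous activation `σ`. -/
noncomputable def homActivation (α : ℕ) (a b t : ℝ) : ℝ := a * reluPow α t + b * reluPow α (-t)

lemma measurable_reluPow (α : ℕ) : Measurable (reluPow α) :=
  Measurable.ite measurableSet_Ioi (measurable_id.pow_const α) measurable_const

lemma abs_reluPow_le (α : ℕ) (t : ℝ) : |reluPow α t| ≤ |t| ^ α := by
  unfold reluPow
  split_ifs
  · rw [abs_pow]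
  · rw [abs_zero]; positivity

lemma reluPow_add_neg_one_pow_mul_reluPow_neg (α : ℕ) {t : ℝ} (ht : t ≠ 0) :
    reluPow α t + (-1) ^ α * reluPow α (-t) = t ^ α := by
  rcases ht.lt_or_gt with h | h
  · simp [reluPow, h, h.not_gt, ← neg_pow]
  · simp [reluPow, h, h.not_gt]

lemma measurable_homActivation (α : ℕ) (a b : ℝ) : Measurable (homActivation α a b) :=
  (measurable_const.mul (measurable_reluPow α)).add
    (measurable_const.mul ((measurable_reluPow α).comp measurable_neg))

lemma homActivation_zero (α : ℕ) (a b : ℝ) : homActivation α a b 0 = 0 := by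
  simp [homActivation, reluPow]

lemma abs_homActivation_le (α : ℕ) (a b t : ℝ) :
    |homActivation α a b t| ≤ (|a| + |b|) * |t| ^ α := by
  have h₁ := abs_reluPow_le α t
  have h₂ := abs_reluPow_le α (-t)
  rw [abs_neg] at h₂
  calc |homActivation α a b t| ≤ |a| * |reluPow α t| + |b| * |reluPow α (-t)| := by
        rw [homActivation, ← abs_mul, ← abs_mul]; exact abs_add_le _ _
    _ ≤ (|a| + |b|) * |t| ^ α := by rw [add_mul]; gcongr

lemma abs_homActivation_le_of_abs_le_one (α : ℕ) (a b : ℝ) {t : ℝ} (ht : |t| ≤ 1) :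
    |homActivation α a b t| ≤ |a| + |b| :=
  (abs_homActivation_le α a b t).trans
    (mul_le_of_le_one_right (by positivity) (pow_le_one₀ (abs_nonneg t) ht))

lemma homActivation_add_neg_one_pow_mul_neg (α : ℕ) (a b : ℝ) {t : ℝ} (ht : t ≠ 0) :
    homActivation α a b t + (-1) ^ α * homActivation α a b (-t) = (a + (-1) ^ α * b) * t ^ α := by
  have h₁ := reluPow_add_neg_one_pow_mul_reluPow_neg α ht
  have h₂ := reluPow_add_neg_one_pow_mul_reluPow_neg α (neg_ne_zero.2 ht)
  rw [neg_neg, neg_pow t] at h₂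
  simp only [homActivation, neg_neg]
  linear_combination a * h₁ + b * h₂

section Orthogonality

open Complex

lemma integral_exp_int_mul_I_of_even {n : ℤ} (hn : n ≠ 0) (he : Even n) :
    ∫ φ in (0 : ℝ)..π, cexp (n * φ * I) = 0 := by
  obtain ⟨m, rfl⟩ := he
  have hc : ((m + m : ℤ) : ℂ) * I ≠ 0 := by simpa [Complex.ext_iff] using hn
  simp_rw [mul_right_comm _ _ I]
  rw [integral_exp_mul_complex hc, ofReal_zero, mul_zero, Complex.exp_zero,
    show ((m + m : ℤ) : ℂ) * I * π = m * (2 * π * I) by push_cast; ring,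
    Complex.exp_int_mul_two_pi_mul_I, sub_self, zero_div]

lemma ofReal_linear_trig_eq (u v φ : ℝ) :
    ((u * Real.cos φ + v * Real.sin φ : ℝ) : ℂ) =
      (u - v * I) / 2 * cexp (φ * I) + (u + v * I) / 2 * cexp (-φ * I) := by
  rw [Complex.exp_mul_I, Complex.exp_mul_I, Complex.cos_neg, Complex.sin_neg]
  push_cast
  linear_combination ((v : ℂ) * Complex.sin φ) * I_sq

theorem integral_linear_trig_pow_mul_exp (u v : ℝ) {α : ℕ} {n : ℤ} (hn : (α : ℤ) < |n|)
    (he : Even (n - α)) :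
    ∫ φ in (0 : ℝ)..π, ((u * Real.cos φ + v * Real.sin φ : ℝ) : ℂ) ^ α * cexp (n * φ * I) = 0 := by
  induction α generalizing n with
  | zero => simpa using integral_exp_int_mul_I_of_even (abs_pos.mp hn) (by simpa using he)
  | succ α ih =>
    -- multiplying by `u cos φ + v sin φ` shifts the frequency by `±1`, which keeps both hypotheses
    have hint : ∀ m : ℤ, IntervalIntegrable (fun φ : ℝ =>
        ((u * Real.cos φ + v * Real.sin φ : ℝ) : ℂ) ^ α * cexp (m * φ * I)) volume 0 π :=
      fun m => by apply Continuous.intervalIntegrable; fun_prop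
    have hstep : ∀ φ : ℝ,
        ((u * Real.cos φ + v * Real.sin φ : ℝ) : ℂ) ^ (α + 1) * cexp (n * φ * I) =
          (u - v * I) / 2 * (((u * Real.cos φ + v * Real.sin φ : ℝ) : ℂ) ^ α *
            cexp ((n + 1 : ℤ) * φ * I)) +
          (u + v * I) / 2 * (((u * Real.cos φ + v * Real.sin φ : ℝ) : ℂ) ^ α *
            cexp ((n - 1 : ℤ) * φ * I)) := fun φ => by
      rw [pow_succ, mul_assoc, ofReal_linear_trig_eq,
        show ((n + 1 : ℤ) : ℂ) * φ * I = φ * I + n * φ * I by push_cast; ring,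
        show ((n - 1 : ℤ) : ℂ) * φ * I = -φ * I + n * φ * I by push_cast; ring,
        Complex.exp_add, Complex.exp_add]
      ring
    simp_rw [hstep]
    rw [intervalIntegral.integral_add ((hint _).const_mul _) ((hint _).const_mul _),
      intervalIntegral.integral_const_mul, intervalIntegral.integral_const_mul,
      ih (n := n + 1) (by rw [lt_abs] at hn ⊢; omega) (by rw [Int.even_iff] at he ⊢; omega),
      ih (n := n - 1) (by rw [lt_abs] at hn ⊢; omega) (by rw [Int.even_iff] at he ⊢; omega),
      mul_zero, mul_zero, add_zero]

theorem integral_linear_trig_pow_mul_cos (u v : ℝ) {α k : ℕ} (hk : α < k) (he : Even (k + α)) :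
    ∫ φ in (0 : ℝ)..π, (u * Real.cos φ + v * Real.sin φ) ^ α * Real.cos (k * φ) = 0 := by
  rw [Nat.even_iff] at he
  have hpos := integral_linear_trig_pow_mul_exp u v (α := α) (n := k) (by rw [lt_abs]; omega)
    (by rw [Int.even_iff]; omega)
  have hneg := integral_linear_trig_pow_mul_exp u v (α := α) (n := -k) (by rw [lt_abs]; omega)
    (by rw [Int.even_iff]; omega)
  have hint : ∀ n : ℤ, IntervalIntegrable (fun φ : ℝ =>
      ((u * Real.cos φ + v * Real.sin φ : ℝ) : ℂ) ^ α * cexp (n * φ * I)) volume 0 π :=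
    fun n => by apply Continuous.intervalIntegrable; fun_prop
  have hcos : ∀ φ : ℝ, (((u * Real.cos φ + v * Real.sin φ) ^ α * Real.cos (k * φ) : ℝ) : ℂ) =
      (((u * Real.cos φ + v * Real.sin φ : ℝ) : ℂ) ^ α * cexp ((k : ℤ) * φ * I) +
        ((u * Real.cos φ + v * Real.sin φ : ℝ) : ℂ) ^ α * cexp ((-k : ℤ) * φ * I)) / 2 :=
    fun φ => by
      rw [Complex.ofReal_mul, Complex.ofReal_pow, Complex.ofReal_cos, Complex.cos]
      push_cast
      ring_nf
  apply Complex.ofReal_injective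
  rw [← intervalIntegral.integral_ofReal]
  simp_rw [hcos]
  rw [intervalIntegral.integral_div, intervalIntegral.integral_add (hint _) (hint _), hpos, hneg]
  simp

end Orthogonality

lemma countable_setOf_linear_trig_eq_zero {u v : ℝ} (huv : u ≠ 0 ∨ v ≠ 0) :
    {φ : ℝ | u * cos φ + v * sin φ = 0}.Countable := by
  set z : ℂ := ⟨v, u⟩
  have hz : z ≠ 0 := fun h => by
    rcases huv with hu | hv
    · exact hu (congrArg Complex.im h)
    · exact hv (congrArg Complex.re h)
  have hpolar : ∀ φ, u * cos φ + v * sin φ = ‖z‖ * sin (φ + Complex.arg z) := by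
    intro φ
    rw [sin_add, Complex.cos_arg hz, Complex.sin_arg]
    field_simp
    ring
  refine (Set.countable_range fun k : ℤ => k * π - Complex.arg z).mono fun φ hφ => ?_
  rw [Set.mem_ofPred_eq, hpolar, mul_eq_zero, norm_eq_zero, or_iff_right hz,
    sin_eq_zero_iff] at hφ
  obtain ⟨k, hk⟩ := hφ
  exact ⟨k, by linarith⟩

lemma integral_zero_two_pi_eq_integral_add_pi {F : ℝ → ℝ}
    (hF : IntervalIntegrable F volume 0 (2 * π)) :
    ∫ φ in (0 : ℝ)..2 * π, F φ = ∫ φ in (0 : ℝ)..π, (F φ + F (φ + π)) := by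
  have hπ : π ∈ Set.uIcc 0 (2 * π) := Set.mem_uIcc_of_le pi_pos.le (by linarith [pi_pos])
  have h₁ : IntervalIntegrable F volume 0 π := hF.mono_set (Set.uIcc_subset_uIcc_left hπ)
  have h₂ : IntervalIntegrable F volume π (2 * π) := hF.mono_set (Set.uIcc_subset_uIcc_right hπ)
  have h₂' : IntervalIntegrable (fun φ => F (φ + π)) volume 0 π := by
    simpa [two_mul] using h₂.comp_add_right π
  rw [← intervalIntegral.integral_add_adjacent_intervals h₁ h₂,
    intervalIntegral.integral_add h₁ h₂', intervalIntegral.integral_comp_add_right]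
  simp [two_mul]

lemma intervalIntegrable_homActivation_linear_trig_mul_cos (α : ℕ) (a b u v : ℝ) (k : ℕ)
    (s t : ℝ) :
    IntervalIntegrable (fun φ => homActivation α a b (u * cos φ + v * sin φ) * cos (k * φ))
      volume s t := by
  refine (intervalIntegrable_const (c := (|a| + |b|) * (|u| + |v|) ^ α)).mono_fun
    (((measurable_homActivation α a b).comp (by fun_prop)).mul (by fun_prop)).aestronglyMeasurable
    (.of_forall fun φ => ?_)
  have ht : |u * cos φ + v * sin φ| ≤ |u| + |v| := by
    refine (abs_add_le _ _).trans ?_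
    rw [abs_mul, abs_mul]
    gcongr
    exacts [mul_le_of_le_one_right (abs_nonneg u) (abs_cos_le_one φ),
      mul_le_of_le_one_right (abs_nonneg v) (abs_sin_le_one φ)]
  beta_reduce
  rw [Real.norm_eq_abs, Real.norm_eq_abs, abs_mul]
  calc _ ≤ |homActivation α a b (u * cos φ + v * sin φ)| :=
        mul_le_of_le_one_right (abs_nonneg _) (abs_cos_le_one _)
    _ ≤ (|a| + |b|) * (|u| + |v|) ^ α := (abs_homActivation_le α a b _).trans (by gcongr)
    _ ≤ _ := le_abs_self _

theorem integral_homActivation_linear_trig_mul_cos (α : ℕ) (a b u v : ℝ) {k : ℕ} (hk : α < k)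
    (he : Even (k + α)) :
    ∫ φ in (0 : ℝ)..2 * π, homActivation α a b (u * cos φ + v * sin φ) * cos (k * φ) = 0 := by
  by_cases huv : u = 0 ∧ v = 0
  · simp [huv.1, huv.2, homActivation_zero]
  have hshift : ∀ φ, cos (k * (φ + π)) = (-1) ^ α * cos (k * φ) := fun φ => by
    rw [mul_add, cos_add_nat_mul_pi, neg_one_pow_eq_pow_mod_two,
      show k % 2 = α % 2 by rw [Nat.even_iff] at he; omega, ← neg_one_pow_eq_pow_mod_two]
  have hfold : ∀ᵐ φ, φ ∈ Set.uIoc 0 π →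
      homActivation α a b (u * cos φ + v * sin φ) * cos (k * φ) +
        homActivation α a b (u * cos (φ + π) + v * sin (φ + π)) * cos (k * (φ + π))
      = (a + (-1) ^ α * b) * ((u * cos φ + v * sin φ) ^ α * cos (k * φ)) := by
    have hnull := (countable_setOf_linear_trig_eq_zero (not_and_or.mp huv)).measure_zero volume
    filter_upwards [measure_eq_zero_iff_ae_notMem.mp hnull] with φ hφ _
    rw [cos_add_pi, sin_add_pi, hshift,
      show u * -cos φ + v * -sin φ = -(u * cos φ + v * sin φ) by ring]
    linear_combination cos (k * φ) * homActivation_add_neg_one_pow_mul_neg α a b hφ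
  rw [integral_zero_two_pi_eq_integral_add_pi
      (intervalIntegrable_homActivation_linear_trig_mul_cos α a b u v k _ _),
    intervalIntegral.integral_congr_ae hfold, intervalIntegral.integral_const_mul,
    integral_linear_trig_pow_mul_cos u v hk he, mul_zero]

lemma integral_cos_nat_mul_sq {k : ℕ} (hk : k ≠ 0) :
    ∫ φ in (0 : ℝ)..2 * π, cos (k * φ) ^ 2 = π := by
  have hk' : (k : ℝ) ≠ 0 := Nat.cast_ne_zero.mpr hk
  rw [intervalIntegral.integral_comp_mul_left (fun x => cos x ^ 2) hk', integral_cos_sq,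
    show (k : ℝ) * (2 * π) = (2 * k : ℕ) * π by push_cast; ring, sin_nat_mul_pi]
  simp only [mul_zero, sin_zero, sub_zero, smul_eq_mul]
  field_simp
  push_cast
  ring

section Tilt

variable {Ω : Type*} [MeasurableSpace Ω]

lemma isProbabilityMeasure_withDensity_one_add (μ : Measure Ω) [IsProbabilityMeasure μ]
    {h : Ω → ℝ} (hm : Measurable h) (hb : ∀ ω, |h ω| ≤ 1) (h₀ : ∫ ω, h ω ∂μ = 0) :
    IsProbabilityMeasure (μ.withDensity fun ω => ENNReal.ofReal (1 + h ω)) := by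
  have hint : Integrable h μ := .of_bound hm.aestronglyMeasurable 1 (.of_forall hb)
  have hint' : Integrable (fun ω => 1 + h ω) μ := (integrable_const 1).add hint
  have hnonneg : ∀ ω, 0 ≤ 1 + h ω := fun ω => by linarith [neg_abs_le (h ω), hb ω]
  constructor
  rw [withDensity_apply _ MeasurableSet.univ, Measure.restrict_univ,
    ← ofReal_integral_eq_lintegral_ofReal hint' (.of_forall hnonneg),
    integral_add (integrable_const 1) hint, h₀]
  simp

lemma integral_withDensity_one_add {μ : Measure Ω} [IsFiniteMeasure μ] {h : Ω → ℝ}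
    (hm : Measurable h) (hb : ∀ ω, |h ω| ≤ 1) {g : Ω → ℝ} (hg : Integrable g μ) :
    ∫ ω, g ω ∂μ.withDensity (fun ω => ENNReal.ofReal (1 + h ω)) =
      ∫ ω, g ω ∂μ + ∫ ω, g ω * h ω ∂μ := by
  have hnonneg : ∀ ω, 0 ≤ 1 + h ω := fun ω => by linarith [neg_abs_le (h ω), hb ω]
  have hgh : Integrable (fun ω => g ω * h ω) μ :=
    hg.mul_bdd hm.aestronglyMeasurable (.of_forall fun ω => (Real.norm_eq_abs _).trans_le (hb ω))
  rw [integral_withDensity_eq_integral_toReal_smul (by fun_prop) (.of_forall fun _ => by simp),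
    ← integral_add hg hgh]
  congr 1 with ω
  rw [ENNReal.toReal_ofReal (hnonneg ω), smul_eq_mul]
  ring

end Tilt

noncomputable def angleUniform : Measure ℝ := ProbabilityTheory.cond volume (Set.Ioc 0 (2 * π))

instance : IsProbabilityMeasure angleUniform :=
  ProbabilityTheory.cond_isProbabilityMeasure_of_finite (by simp [pi_pos])
    (by rw [Real.volume_Ioc]; exact ENNReal.ofReal_ne_top)

lemma integral_angleUniform (g : ℝ → ℝ) :
    ∫ φ, g φ ∂angleUniform = (2 * π)⁻¹ * ∫ φ in (0 : ℝ)..2 * π, g φ := by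
  rw [angleUniform, ProbabilityTheory.cond, integral_smul_measure,
    intervalIntegral.integral_of_le (by positivity), Real.volume_Ioc, sub_zero,
    ENNReal.toReal_inv, ENNReal.toReal_ofReal (by positivity), smul_eq_mul]

noncomputable def cosTiltedAngle (k : ℕ) : Measure ℝ :=
  angleUniform.withDensity fun φ => ENNReal.ofReal (1 + cos (k * φ))

lemma isProbabilityMeasure_cosTiltedAngle {k : ℕ} (hk : k ≠ 0) :
    IsProbabilityMeasure (cosTiltedAngle k) := by
  refine isProbabilityMeasure_withDensity_one_add _ (by fun_prop) (fun φ => abs_cos_le_one _) ?_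
  rw [integral_angleUniform, intervalIntegral.integral_comp_mul_left _ (by positivity),
    integral_cos, mul_zero, sin_zero, sub_zero,
    show (k : ℝ) * (2 * π) = (2 * k : ℕ) * π by push_cast; ring, sin_nat_mul_pi, smul_zero,
    mul_zero]

section ImageMeasures

variable {X : Type*} [MeasurableSpace X] {p : ℝ → X}

lemma integral_map_cosTiltedAngle (hp : Measurable p) (k : ℕ) {f : X → ℝ} (hf : Measurable f)
    {C : ℝ} (hC : ∀ φ, |f (p φ)| ≤ C) :
    ∫ x, f x ∂(cosTiltedAngle k).map p =
      ∫ x, f x ∂angleUniform.map p + (2 * π)⁻¹ * ∫ φ in (0 : ℝ)..2 * π, f (p φ) * cos (k * φ) := by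
  rw [integral_map hp.aemeasurable hf.aestronglyMeasurable,
    integral_map hp.aemeasurable hf.aestronglyMeasurable, cosTiltedAngle,
    integral_withDensity_one_add (g := fun φ => f (p φ)) (by fun_prop) (fun φ => abs_cos_le_one _)
      (.of_bound (hf.comp hp).aestronglyMeasurable C (.of_forall hC)),
    integral_angleUniform fun φ => f (p φ) * cos (k * φ)]

lemma map_angleUniform_ne_map_cosTiltedAngle (hp : Measurable p) {k : ℕ} (hk : k ≠ 0)
    {f : X → ℝ} (hf : Measurable f) (hfp : ∀ φ, f (p φ) = cos (k * φ)) :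
    angleUniform.map p ≠ (cosTiltedAngle k).map p := by
  intro h
  have key := integral_map_cosTiltedAngle hp k hf (C := 1) fun φ => by
    rw [hfp]; exact abs_cos_le_one _
  simp only [hfp, ← sq] at key
  rw [integral_cos_nat_mul_sq hk, h, left_eq_add] at key
  exact (by positivity : (0 : ℝ) < (2 * π)⁻¹ * π).ne' key

end ImageMeasures

section GreatCircle

variable {ι : Type*} [DecidableEq ι]

noncomputable def greatCircle (i j : ι) (φ : ℝ) : EuclideanSpace ℝ ι :=
  cos φ • EuclideanSpace.single i 1 + sin φ • EuclideanSpace.single j 1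

lemma continuous_greatCircle [Fintype ι] (i j : ι) : Continuous (greatCircle i j) := by
  unfold greatCircle; fun_prop

lemma greatCircle_apply_left {i j : ι} (hij : i ≠ j) (φ : ℝ) : greatCircle i j φ i = cos φ := by
  simp [greatCircle, hij]

lemma inner_greatCircle [Fintype ι] (i j : ι) (φ : ℝ) (θ : EuclideanSpace ℝ ι) :
    ⟪greatCircle i j φ, θ⟫ = θ i * cos φ + θ j * sin φ := by
  simp [greatCircle, inner_add_left, inner_smul_left, EuclideanSpace.inner_single_left, mul_comm]

lemma greatCircle_mem_sphere [Fintype ι] {i j : ι} (hij : i ≠ j) (φ : ℝ) :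
    greatCircle i j φ ∈ Metric.sphere (0 : EuclideanSpace ℝ ι) 1 := by
  have hj : greatCircle i j φ j = sin φ := by simp [greatCircle, hij.symm]
  rw [mem_sphere_zero_iff_norm, ← pow_left_inj₀ (norm_nonneg _) zero_le_one two_ne_zero,
    ← real_inner_self_eq_norm_sq, inner_greatCircle, greatCircle_apply_left hij, hj]
  simp [← sq, cos_sq_add_sin_sq]

end GreatCircle

/-- for `K = S^d` and an α-positive homogeneous activation
`σ(t) = a(t)_+^α + b(−t)_+^α`, the `F₁` and `F₂` IPMs are not distances: there exist
probability measures `μ ≠ ν` on `S^d` whose generalized moments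
`θ ↦ ∫ σ(⟨x,θ⟩) dμ(x)` all coincide. -/
theorem stmt_4 (d α : ℕ) (hd : 1 ≤ d) (a b : ℝ) :
    ∃ μ ν : Measure (Metric.sphere (0 : EuclideanSpace ℝ (Fin (d + 1))) 1),
      IsProbabilityMeasure μ ∧ IsProbabilityMeasure ν ∧ μ ≠ ν ∧
      ∀ θ : Metric.sphere (0 : EuclideanSpace ℝ (Fin (d + 1))) 1,
        ∫ x, (a * reluPow α ⟪(x : EuclideanSpace ℝ (Fin (d + 1))),
                  (θ : EuclideanSpace ℝ (Fin (d + 1)))⟫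
              + b * reluPow α (-⟪(x : EuclideanSpace ℝ (Fin (d + 1))),
                  (θ : EuclideanSpace ℝ (Fin (d + 1)))⟫)) ∂μ
          = ∫ x, (a * reluPow α ⟪(x : EuclideanSpace ℝ (Fin (d + 1))),
                  (θ : EuclideanSpace ℝ (Fin (d + 1)))⟫
              + b * reluPow α (-⟪(x : EuclideanSpace ℝ (Fin (d + 1))),
                  (θ : EuclideanSpace ℝ (Fin (d + 1)))⟫)) ∂ν := by
  obtain ⟨n, rfl⟩ : ∃ n, d = n + 1 := ⟨d - 1, by omega⟩
  have h01 : (0 : Fin (n + 1 + 1)) ≠ 1 := by simp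
  set p := Set.codRestrict (greatCircle 0 1) _ (greatCircle_mem_sphere h01)
  have hp : Measurable p := ((continuous_greatCircle 0 1).codRestrict _).measurable
  have := isProbabilityMeasure_cosTiltedAngle (k := α + 2) (by omega)
  refine ⟨angleUniform.map p, (cosTiltedAngle (α + 2)).map p,
    Measure.isProbabilityMeasure_map hp.aemeasurable,
    Measure.isProbabilityMeasure_map hp.aemeasurable, ?_, fun θ => ?_⟩
  · refine map_angleUniform_ne_map_cosTiltedAngle hp (by omega) (f := fun x =>
      (Polynomial.Chebyshev.T ℝ (α + 2 : ℕ)).eval ((x : EuclideanSpace ℝ (Fin (n + 1 + 1))) 0))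
      (by fun_prop) fun φ => ?_
    rw [Set.val_codRestrict_apply, greatCircle_apply_left h01, Polynomial.Chebyshev.T_real_cos]
    push_cast; rfl
  · have key := integral_map_cosTiltedAngle hp (α + 2)
      (f := fun x => homActivation α a b ⟪(x : EuclideanSpace ℝ (Fin (n + 1 + 1))),
        (θ : EuclideanSpace ℝ (Fin (n + 1 + 1)))⟫)
      ((measurable_homActivation α a b).comp (by fun_prop)) fun φ =>
        abs_homActivation_le_of_abs_le_one α a b ((abs_real_inner_le_norm _ _).trans_eq (by simp))
    simp only [p, Set.val_codRestrict_apply, inner_greatCircle] at key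
    rw [integral_homActivation_linear_trig_mul_cos α a b _ _ (by omega) ⟨α + 1, by ring⟩,
      mul_zero, add_zero] at key
    exact key.symm
end

section
/- For a probability measure ν on S^{d-1} with continuous, a.e.-differentiable density dν/dτ, and any continuous, a.e.-differentiable h : S^{d-1} → R^d, the Stein identity holds: E_{x∼ν}[Tr((∇ log(dν/dτ)(x) − (d−1)x) h(x)ᵀ + ∇h(x))] = 0, where ∇ is the Riemannian gradient on the sphere. -/
open MeasureTheory
open scoped RealInnerProductSpace ENNReal NNReal

namespace Stmt15Aux

variable {d : ℕ}

noncomputable def rotL (d : ℕ) (i j : Fin d) (t : ℝ) :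
    EuclideanSpace ℝ (Fin d) →ₗ[ℝ] EuclideanSpace ℝ (Fin d) where
  toFun x := x + ((Real.cos t - 1) * x i - Real.sin t * x j) • EuclideanSpace.single i (1:ℝ)
      + (Real.sin t * x i + (Real.cos t - 1) * x j) • EuclideanSpace.single j (1:ℝ)
  map_add' x y := by
    simp only [PiLp.add_apply]
    module
  map_smul' c x := by
    simp only [PiLp.smul_apply, smul_eq_mul, RingHom.id_apply]
    module

lemma rotL_apply_i {i j : Fin d} (hij : i ≠ j) (t : ℝ) (x : EuclideanSpace ℝ (Fin d)) :
    rotL d i j t x i = Real.cos t * x i - Real.sin t * x j := by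
  simp [rotL, EuclideanSpace.single_apply, hij, hij.symm]
  ring

lemma rotL_apply_j {i j : Fin d} (hij : i ≠ j) (t : ℝ) (x : EuclideanSpace ℝ (Fin d)) :
    rotL d i j t x j = Real.sin t * x i + Real.cos t * x j := by
  simp [rotL, EuclideanSpace.single_apply, hij, hij.symm]
  ring

lemma rotL_apply_ne {i j k : Fin d} (hk : k ≠ i) (hk' : k ≠ j) (t : ℝ)
    (x : EuclideanSpace ℝ (Fin d)) : rotL d i j t x k = x k := by
  simp [rotL, EuclideanSpace.single_apply, hk, hk']

lemma sum_decomp {i j : Fin d} (hij : i ≠ j) (f : Fin d → ℝ) :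
    ∑ k, f k = f i + f j + ∑ k ∈ (Finset.univ.erase i).erase j, f k := by
  rw [← Finset.add_sum_erase _ f (Finset.mem_univ i),
    ← Finset.add_sum_erase _ f (Finset.mem_erase.2 ⟨hij.symm, Finset.mem_univ j⟩)]
  ring

lemma rotL_inner {i j : Fin d} (hij : i ≠ j) (t : ℝ) (x y : EuclideanSpace ℝ (Fin d)) :
    ⟪rotL d i j t x, rotL d i j t y⟫ = ⟪x, y⟫ := by
  simp only [PiLp.inner_apply, RCLike.inner_apply, conj_trivial]
  rw [sum_decomp hij (fun k => rotL d i j t y k * rotL d i j t x k),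
    sum_decomp hij (fun k => y k * x k)]
  have : ∑ k ∈ (Finset.univ.erase i).erase j, rotL d i j t y k * rotL d i j t x k
      = ∑ k ∈ (Finset.univ.erase i).erase j, y k * x k := by
    refine Finset.sum_congr rfl fun k hk => ?_
    rw [Finset.mem_erase, Finset.mem_erase] at hk
    rw [rotL_apply_ne hk.2.1 hk.1, rotL_apply_ne hk.2.1 hk.1]
  rw [this, rotL_apply_i hij, rotL_apply_j hij, rotL_apply_i hij, rotL_apply_j hij]
  have := Real.sin_sq_add_cos_sq t
  linear_combination (x i * y i + x j * y j) * this

noncomputable def rot (d : ℕ) (i j : Fin d) (hij : i ≠ j) (t : ℝ) :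
    EuclideanSpace ℝ (Fin d) ≃ₗᵢ[ℝ] EuclideanSpace ℝ (Fin d) :=
  ((rotL d i j t).isometryOfInner (fun x y => rotL_inner hij t x y)).toLinearIsometryEquiv rfl

lemma rot_apply {i j : Fin d} (hij : i ≠ j) (t : ℝ) (x : EuclideanSpace ℝ (Fin d)) :
    rot d i j hij t x = rotL d i j t x := rfl

noncomputable def rotV (d : ℕ) (i j : Fin d) (t : ℝ) (x : EuclideanSpace ℝ (Fin d)) :
    EuclideanSpace ℝ (Fin d) :=
  (-Real.sin t * x i - Real.cos t * x j) • EuclideanSpace.single i (1:ℝ)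
    + (Real.cos t * x i - Real.sin t * x j) • EuclideanSpace.single j (1:ℝ)

lemma hasDerivAt_rotL (i j : Fin d) (x : EuclideanSpace ℝ (Fin d)) (t : ℝ) :
    HasDerivAt (fun s => rotL d i j s x) (rotV d i j t x) t := by
  have h1 : HasDerivAt (fun s => (Real.cos s - 1) * x i - Real.sin s * x j)
      (-Real.sin t * x i - Real.cos t * x j) t := by
    exact (((Real.hasDerivAt_cos t).sub_const 1).mul_const (x i)).sub
      ((Real.hasDerivAt_sin t).mul_const (x j))
  have h2 : HasDerivAt (fun s => Real.sin s * x i + (Real.cos s - 1) * x j)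
      (Real.cos t * x i - Real.sin t * x j) t := by
    exact (((Real.hasDerivAt_sin t).mul_const (x i)).add
      (((Real.hasDerivAt_cos t).sub_const 1).mul_const (x j))).congr_deriv (by ring)
  have := ((h1.smul_const (EuclideanSpace.single i (1:ℝ))).const_add x).add
    (h2.smul_const (EuclideanSpace.single j (1:ℝ)))
  exact this

lemma rotL_zero (i j : Fin d) (x : EuclideanSpace ℝ (Fin d)) : rotL d i j 0 x = x := by
  simp [rotL]

lemma rotV_zero (i j : Fin d) (x : EuclideanSpace ℝ (Fin d)) :
    rotV d i j 0 x = (-(x j)) • EuclideanSpace.single i (1:ℝ)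
      + (x i) • EuclideanSpace.single j (1:ℝ) := by
  simp [rotV]

lemma coord_abs_le_norm (y : EuclideanSpace ℝ (Fin d)) (k : Fin d) : |y k| ≤ ‖y‖ := by
  have := abs_real_inner_le_norm (EuclideanSpace.single k (1:ℝ)) y
  simpa [EuclideanSpace.inner_single_left, EuclideanSpace.norm_single] using this

lemma norm_rotV_le (i j : Fin d) (t : ℝ) (y : EuclideanSpace ℝ (Fin d)) (hy : ‖y‖ = 1) :
    ‖rotV d i j t y‖ ≤ 4 := by
  have hi := coord_abs_le_norm y i
  have hj := coord_abs_le_norm y j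
  rw [hy] at hi hj
  have h1 : ‖rotV d i j t y‖ ≤ |(-Real.sin t * y i - Real.cos t * y j)|
      + |(Real.cos t * y i - Real.sin t * y j)| := by
    refine (norm_add_le _ _).trans ?_
    simp [norm_smul, EuclideanSpace.norm_single]
  have e1 : |(-Real.sin t * y i - Real.cos t * y j)| ≤ 2 := by
    refine (abs_sub _ _).trans ?_
    have a1 : |(-Real.sin t * y i)| ≤ 1 := by
      rw [abs_mul, abs_neg]
      exact mul_le_one₀ (Real.abs_sin_le_one t) (abs_nonneg _) hi
    have a2 : |(Real.cos t * y j)| ≤ 1 := by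
      rw [abs_mul]
      exact mul_le_one₀ (Real.abs_cos_le_one t) (abs_nonneg _) hj
    linarith
  have e2 : |(Real.cos t * y i - Real.sin t * y j)| ≤ 2 := by
    refine (abs_sub _ _).trans ?_
    have a1 : |(Real.cos t * y i)| ≤ 1 := by
      rw [abs_mul]
      exact mul_le_one₀ (Real.abs_cos_le_one t) (abs_nonneg _) hi
    have a2 : |(Real.sin t * y j)| ≤ 1 := by
      rw [abs_mul]
      exact mul_le_one₀ (Real.abs_sin_le_one t) (abs_nonneg _) hj
    linarith
  linarith

lemma continuous_integrable {X : Type*} [MeasurableSpace X] [TopologicalSpace X]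
    [OpensMeasurableSpace X] [CompactSpace X] (μ : Measure X) [IsFiniteMeasure μ]
    {f : X → ℝ} (hf : Continuous f) : Integrable f μ := by
  obtain ⟨C, hC⟩ := (isCompact_range hf.norm).bddAbove
  exact (integrable_const C).mono' hf.aestronglyMeasurable
    (Filter.Eventually.of_forall fun x => hC (Set.mem_range_self x))

end Stmt15Aux

namespace Stmt15Aux

lemma integral_D_zero (d : ℕ)
    (τ : Measure (Metric.sphere (0 : EuclideanSpace ℝ (Fin d)) 1)) [IsProbabilityMeasure τ]
    (hinv : ∀ O : EuclideanSpace ℝ (Fin d) ≃ₗᵢ[ℝ] EuclideanSpace ℝ (Fin d),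
      ∀ f : EuclideanSpace ℝ (Fin d) → ℝ, Continuous f →
        ∫ x, f (O (x : EuclideanSpace ℝ (Fin d))) ∂τ
          = ∫ x, f (x : EuclideanSpace ℝ (Fin d)) ∂τ)
    {i j : Fin d} (hij : i ≠ j) (G : EuclideanSpace ℝ (Fin d) → ℝ) (hG : ContDiff ℝ (⊤ : ℕ∞) G) :
    ∫ x, ((x : EuclideanSpace ℝ (Fin d)) j
        * fderiv ℝ G (x : EuclideanSpace ℝ (Fin d)) (EuclideanSpace.single i (1:ℝ))
      - (x : EuclideanSpace ℝ (Fin d)) i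
        * fderiv ℝ G (x : EuclideanSpace ℝ (Fin d)) (EuclideanSpace.single j (1:ℝ))) ∂τ = 0 := by
  classical
  have hnorm : ∀ x : Metric.sphere (0 : EuclideanSpace ℝ (Fin d)) 1,
      ‖(x : EuclideanSpace ℝ (Fin d))‖ = 1 := fun x => norm_eq_of_mem_sphere x
  have hrotmem : ∀ (t : ℝ) (x : Metric.sphere (0 : EuclideanSpace ℝ (Fin d)) 1), ‖rotL d i j t (x : EuclideanSpace ℝ (Fin d))‖ = 1 := by
    intro t x
    rw [← rot_apply hij t]
    rw [(rot d i j hij t).norm_map]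
    exact hnorm x
  set F : ℝ → Metric.sphere (0 : EuclideanSpace ℝ (Fin d)) 1 → ℝ := fun t x => G (rotL d i j t (x : EuclideanSpace ℝ (Fin d))) with hF
  set F' : ℝ → Metric.sphere (0 : EuclideanSpace ℝ (Fin d)) 1 → ℝ := fun t x => fderiv ℝ G (rotL d i j t (x : EuclideanSpace ℝ (Fin d)))
      (rotV d i j t (x : EuclideanSpace ℝ (Fin d))) with hF'
  obtain ⟨C, hC⟩ := (isCompact_sphere (0 : EuclideanSpace ℝ (Fin d)) 1).exists_bound_of_continuousOn
    ((hG.continuous_fderiv (by simp)).continuousOn)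
  have hrotLcont : ∀ t : ℝ, Continuous fun x : Metric.sphere (0 : EuclideanSpace ℝ (Fin d)) 1 => rotL d i j t (x : EuclideanSpace ℝ (Fin d)) :=
    fun t => (rotL d i j t).continuous_of_finiteDimensional.comp continuous_subtype_val
  have hFmeas : ∀ t : ℝ, AEStronglyMeasurable (F t) τ := fun t =>
    (hG.continuous.comp (hrotLcont t)).aestronglyMeasurable
  have hcoordcont : ∀ k : Fin d, Continuous fun y : EuclideanSpace ℝ (Fin d) => y k :=
    fun k => (EuclideanSpace.proj (𝕜 := ℝ) k).continuous
  have hrotVcont : ∀ t : ℝ, Continuous fun y : EuclideanSpace ℝ (Fin d) => rotV d i j t y := by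
    intro t
    unfold rotV
    exact (((continuous_const.mul (hcoordcont i)).sub
        (continuous_const.mul (hcoordcont j))).smul continuous_const).add
      (((continuous_const.mul (hcoordcont i)).sub
        (continuous_const.mul (hcoordcont j))).smul continuous_const)
  have hF'meas : AEStronglyMeasurable (F' 0) τ := by
    refine Continuous.aestronglyMeasurable ?_
    exact ((hG.continuous_fderiv (by simp)).comp (hrotLcont 0)).clm_apply
      ((hrotVcont 0).comp continuous_subtype_val)
  have hbound : ∀ᵐ x ∂τ, ∀ t ∈ Metric.ball (0:ℝ) 1, ‖F' t x‖ ≤ |C| * 4 := by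
    refine Filter.Eventually.of_forall fun x => fun t _ => ?_
    have h1 : ‖F' t x‖ ≤ ‖fderiv ℝ G (rotL d i j t (x : EuclideanSpace ℝ (Fin d)))‖
        * ‖rotV d i j t (x : EuclideanSpace ℝ (Fin d))‖ :=
      ContinuousLinearMap.le_opNorm _ _
    refine h1.trans (mul_le_mul ?_ (norm_rotV_le i j t _ (hnorm x)) (norm_nonneg _) (abs_nonneg _))
    refine le_trans (hC _ ?_) (le_abs_self C)
    simpa [mem_sphere_iff_norm] using hrotmem t x
  have hdiff : ∀ᵐ x ∂τ, ∀ t ∈ Metric.ball (0:ℝ) 1, HasDerivAt (fun s => F s x) (F' t x) t := by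
    refine Filter.Eventually.of_forall fun x => fun t _ => ?_
    exact (hG.differentiable (by simp) _).hasFDerivAt.comp_hasDerivAt t
      (hasDerivAt_rotL i j (x : EuclideanSpace ℝ (Fin d)) t)
  have hFint : Integrable (F 0) τ := continuous_integrable τ (hG.continuous.comp (hrotLcont 0))
  obtain ⟨-, hderiv⟩ := hasDerivAt_integral_of_dominated_loc_of_deriv_le (Metric.ball_mem_nhds 0 zero_lt_one)
    (Filter.Eventually.of_forall hFmeas) hFint hF'meas hbound (integrable_const _) hdiff
  have hconst : (fun t => ∫ x, F t x ∂τ)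
      = fun _ => ∫ x, G (x : EuclideanSpace ℝ (Fin d)) ∂τ := by
    funext t
    have := hinv (rot d i j hij t) G hG.continuous
    simpa [hF, rot_apply hij] using this
  rw [hconst] at hderiv
  have hzero : ∫ x, F' 0 x ∂τ = 0 := hderiv.unique (hasDerivAt_const 0 _)
  have heq : (fun x : Metric.sphere (0 : EuclideanSpace ℝ (Fin d)) 1 => ((x : EuclideanSpace ℝ (Fin d)) j
        * fderiv ℝ G (x : EuclideanSpace ℝ (Fin d)) (EuclideanSpace.single i (1:ℝ))
      - (x : EuclideanSpace ℝ (Fin d)) i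
        * fderiv ℝ G (x : EuclideanSpace ℝ (Fin d)) (EuclideanSpace.single j (1:ℝ))))
      = fun x : Metric.sphere (0 : EuclideanSpace ℝ (Fin d)) 1 => -(F' 0 x) := by
    funext x
    simp only [hF', rotL_zero, rotV_zero]
    rw [map_add, _root_.map_smul, _root_.map_smul]
    simp only [smul_eq_mul]
    ring
  rw [heq, integral_neg, hzero, neg_zero]





variable {d : ℕ}

lemma sum_single (x : EuclideanSpace ℝ (Fin d)) :
    ∑ k, x k • EuclideanSpace.single k (1:ℝ) = x := by
  classical
  refine PiLp.ext fun m => ?_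
  have h1 : (∑ k, x k • EuclideanSpace.single k (1:ℝ)) m
      = ∑ k, (x k • EuclideanSpace.single k (1:ℝ)) m := by
    rw [WithLp.ofLp_sum, Finset.sum_apply]
  rw [h1]
  simp [PiLp.smul_apply, EuclideanSpace.single_apply, mul_ite]

lemma clm_apply_sum (ℓ : EuclideanSpace ℝ (Fin d) →L[ℝ] ℝ) (x : EuclideanSpace ℝ (Fin d)) :
    ℓ x = ∑ k, x k * ℓ (EuclideanSpace.single k (1:ℝ)) := by
  conv_lhs => rw [← sum_single x]
  rw [map_sum]
  simp [smul_eq_mul]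

lemma norm_sq_sum (x : EuclideanSpace ℝ (Fin d)) (hx : ‖x‖ = 1) :
    ∑ k, x k * x k = 1 := by
  have : ⟪x, x⟫ = 1 := by
    rw [real_inner_self_eq_norm_sq, hx]; norm_num
  rw [PiLp.inner_apply] at this
  simp only [RCLike.inner_apply, conj_trivial] at this
  exact this


section QH

variable (q : EuclideanSpace ℝ (Fin d) → ℝ) (h : EuclideanSpace ℝ (Fin d) → EuclideanSpace ℝ (Fin d))

lemma diff_hi (hh : ContDiff ℝ (⊤ : ℕ∞) h) (i : Fin d) :
    Differentiable ℝ (fun y => h y i) :=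
  (EuclideanSpace.proj (𝕜 := ℝ) i).differentiable.comp (hh.differentiable (by simp))

lemma fderiv_G (hq : ContDiff ℝ (⊤ : ℕ∞) q) (hh : ContDiff ℝ (⊤ : ℕ∞) h) (i j : Fin d)
    (x v : EuclideanSpace ℝ (Fin d)) :
    fderiv ℝ (fun y => y j * (q y * h y i)) x v
      = v j * (q x * h x i)
        + x j * ((fderiv ℝ q x v) * h x i + q x * (fderiv ℝ (fun y => h y i) x v)) := by
  have hqd : HasFDerivAt q (fderiv ℝ q x) x := (hq.differentiable (by simp) x).hasFDerivAt
  have hhd : HasFDerivAt (fun y => h y i) (fderiv ℝ (fun y => h y i) x) x :=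
    (diff_hi h hh i x).hasFDerivAt
  have hj : HasFDerivAt (fun y : EuclideanSpace ℝ (Fin d) => y j)
      (EuclideanSpace.proj (𝕜 := ℝ) j : EuclideanSpace ℝ (Fin d) →L[ℝ] ℝ) x :=
    (EuclideanSpace.proj (𝕜 := ℝ) j).hasFDerivAt
  have hmul : HasFDerivAt (fun y => y j * (q y * h y i)) _ x := hj.mul (hqd.mul hhd)
  rw [hmul.fderiv]
  simp only [ContinuousLinearMap.add_apply, ContinuousLinearMap.coe_smul',
    Pi.smul_apply, Pi.mul_apply, smul_eq_mul]
  have : (EuclideanSpace.proj (𝕜 := ℝ) j) v = v j := rfl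
  rw [this]
  ring

lemma contDiff_G (hq : ContDiff ℝ (⊤ : ℕ∞) q) (hh : ContDiff ℝ (⊤ : ℕ∞) h) (i j : Fin d) :
    ContDiff ℝ (⊤ : ℕ∞) (fun y => y j * (q y * h y i)) :=
  ((EuclideanSpace.proj (𝕜 := ℝ) j).contDiff).mul
    (hq.mul ((EuclideanSpace.proj (𝕜 := ℝ) i).contDiff.comp hh))


end QH


lemma pointwise {d : ℕ} (q : EuclideanSpace ℝ (Fin d) → ℝ)
    (h : EuclideanSpace ℝ (Fin d) → EuclideanSpace ℝ (Fin d))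
    (hq : ContDiff ℝ (⊤ : ℕ∞) q) (hh : ContDiff ℝ (⊤ : ℕ∞) h)
    (x : EuclideanSpace ℝ (Fin d)) (hx : ‖x‖ = 1) (hqx : 0 < q x) :
    q x * (⟪(gradient (fun y => Real.log (q y)) x
            - ⟪gradient (fun y => Real.log (q y)) x, x⟫ • x)
            - ((d : ℝ) - 1) • x, h x⟫
        + ∑ i, ⟪gradient (fun y => h y i) x
            - ⟪gradient (fun y => h y i) x, x⟫ • x, EuclideanSpace.single i (1:ℝ)⟫)
      = ∑ i, ∑ j, (x j * fderiv ℝ (fun y => y j * (q y * h y i)) x (EuclideanSpace.single i (1:ℝ))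
          - x i * fderiv ℝ (fun y => y j * (q y * h y i)) x (EuclideanSpace.single j (1:ℝ))) := by
  classical
  have hq0 : q x ≠ 0 := ne_of_gt hqx
  have grad_inner : ∀ (f : EuclideanSpace ℝ (Fin d) → ℝ) (v : EuclideanSpace ℝ (Fin d)),
      ⟪gradient f x, v⟫ = fderiv ℝ f x v := by
    intro f v
    have : gradient f x = (InnerProductSpace.toDual ℝ _).symm (fderiv ℝ f x) := rfl
    rw [this, InnerProductSpace.toDual_symm_apply]
  have hlogf : fderiv ℝ (fun y => Real.log (q y)) x = (q x)⁻¹ • fderiv ℝ q x :=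
    ((Real.hasDerivAt_log hq0).comp_hasFDerivAt x
      (hq.differentiable (by simp) x).hasFDerivAt).fderiv
  have key : ∀ i : Fin d,
      ∑ j, (x j * fderiv ℝ (fun y => y j * (q y * h y i)) x (EuclideanSpace.single i (1:ℝ))
          - x i * fderiv ℝ (fun y => y j * (q y * h y i)) x (EuclideanSpace.single j (1:ℝ)))
      = q x * (x i * h x i) + h x i * fderiv ℝ q x (EuclideanSpace.single i (1:ℝ))
        + q x * fderiv ℝ (fun y => h y i) x (EuclideanSpace.single i (1:ℝ))
        - (d:ℝ) * (q x * (x i * h x i))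
        - fderiv ℝ q x x * (x i * h x i)
        - q x * (fderiv ℝ (fun y => h y i) x x * x i) := by
    intro i
    have step1 : ∀ j : Fin d,
        x j * fderiv ℝ (fun y => y j * (q y * h y i)) x (EuclideanSpace.single i (1:ℝ))
          - x i * fderiv ℝ (fun y => y j * (q y * h y i)) x (EuclideanSpace.single j (1:ℝ))
        = ((if j = i then x j * (q x * h x i) else 0)
          + (x j * x j) * (h x i * fderiv ℝ q x (EuclideanSpace.single i (1:ℝ))
              + q x * fderiv ℝ (fun y => h y i) x (EuclideanSpace.single i (1:ℝ)))
          - q x * (x i * h x i)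
          - (x i * h x i) * (x j * fderiv ℝ q x (EuclideanSpace.single j (1:ℝ)))
          - (q x * x i) * (x j * fderiv ℝ (fun y => h y i) x (EuclideanSpace.single j (1:ℝ)))) := by
      intro j
      rw [fderiv_G q h hq hh i j, fderiv_G q h hq hh i j,
        EuclideanSpace.single_apply, EuclideanSpace.single_apply]
      simp only [if_pos rfl]
      split_ifs with hji
      · ring
      · ring
    rw [Finset.sum_congr rfl fun j _ => step1 j]
    rw [Finset.sum_sub_distrib, Finset.sum_sub_distrib, Finset.sum_sub_distrib,
      Finset.sum_add_distrib]
    rw [Finset.sum_ite_eq' Finset.univ i (fun j => x j * (q x * h x i))]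
    rw [← Finset.sum_mul, norm_sq_sum x hx]
    rw [Finset.sum_const, Finset.card_univ, Fintype.card_fin, nsmul_eq_mul]
    rw [← Finset.mul_sum, ← Finset.mul_sum]
    rw [← clm_apply_sum (fderiv ℝ q x) x, ← clm_apply_sum (fderiv ℝ (fun y => h y i) x) x]
    simp only [Finset.mem_univ, if_pos]
    ring
  rw [Finset.sum_congr rfl fun i _ => key i]
  have hxh : ⟪x, h x⟫ = ∑ k, x k * h x k := by
    simp [PiLp.inner_apply, RCLike.inner_apply, conj_trivial, mul_comm]
  simp only [inner_sub_left, real_inner_smul_left, grad_inner, hlogf,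
    ContinuousLinearMap.coe_smul', Pi.smul_apply, PiLp.smul_apply, smul_eq_mul,
    EuclideanSpace.inner_single_right, conj_trivial, one_mul]
  rw [hxh, clm_apply_sum (fderiv ℝ q x) (h x)]
  rw [Finset.sum_sub_distrib]
  simp only [Finset.sum_sub_distrib, Finset.sum_add_distrib, ← Finset.mul_sum]
  field_simp
  ring

end Stmt15Aux

open Stmt15Aux in
/-- Stein identity on the sphere: for a probability measure `ν` on `S^{d-1}` with
smooth positive density `q = dν/dτ` w.r.t. the uniform probability measure `τ`, and any smooth
`h : S^{d-1} → ℝ^d` (given via smooth ambient extensions), one has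
`E_{x∼ν}[Tr((∇log q(x) − (d−1)x)h(x)ᵀ + ∇h(x))] = 0`, where `∇` denotes the Riemannian
gradient on the sphere (the tangential projection of the Euclidean gradient). -/
theorem stmt_15 (d : ℕ) (hd : 1 ≤ d)
    (τ : Measure (Metric.sphere (0 : EuclideanSpace ℝ (Fin d)) 1))
    [IsProbabilityMeasure τ]
    (hinv : ∀ O : EuclideanSpace ℝ (Fin d) ≃ₗᵢ[ℝ] EuclideanSpace ℝ (Fin d),
      ∀ f : EuclideanSpace ℝ (Fin d) → ℝ, Continuous f →
        ∫ x, f (O (x : EuclideanSpace ℝ (Fin d))) ∂τ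
          = ∫ x, f (x : EuclideanSpace ℝ (Fin d)) ∂τ)
    (q : EuclideanSpace ℝ (Fin d) → ℝ) (hq : ContDiff ℝ (⊤ : ℕ∞) q)
    (hqpos : ∀ x : EuclideanSpace ℝ (Fin d), ‖x‖ = 1 → 0 < q x)
    (hprob : IsProbabilityMeasure (τ.withDensity
      (fun x : Metric.sphere (0 : EuclideanSpace ℝ (Fin d)) 1 =>
        ENNReal.ofReal (q (x : EuclideanSpace ℝ (Fin d))))))
    (h : EuclideanSpace ℝ (Fin d) → EuclideanSpace ℝ (Fin d)) (hh : ContDiff ℝ (⊤ : ℕ∞) h) :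
    ∫ x, (⟪(gradient (fun y => Real.log (q y)) (x : EuclideanSpace ℝ (Fin d))
            - ⟪gradient (fun y => Real.log (q y)) (x : EuclideanSpace ℝ (Fin d)),
                (x : EuclideanSpace ℝ (Fin d))⟫ • (x : EuclideanSpace ℝ (Fin d)))
            - ((d : ℝ) - 1) • (x : EuclideanSpace ℝ (Fin d)),
          h (x : EuclideanSpace ℝ (Fin d))⟫
        + ∑ i : Fin d,
            ⟪gradient (fun y => h y i) (x : EuclideanSpace ℝ (Fin d))
              - ⟪gradient (fun y => h y i) (x : EuclideanSpace ℝ (Fin d)),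
                  (x : EuclideanSpace ℝ (Fin d))⟫ • (x : EuclideanSpace ℝ (Fin d)),
              EuclideanSpace.single i (1 : ℝ)⟫)
      ∂(τ.withDensity (fun x : Metric.sphere (0 : EuclideanSpace ℝ (Fin d)) 1 =>
          ENNReal.ofReal (q (x : EuclideanSpace ℝ (Fin d))))) = 0 := by
  classical
  have hnorm : ∀ x : Metric.sphere (0 : EuclideanSpace ℝ (Fin d)) 1,
      ‖(x : EuclideanSpace ℝ (Fin d))‖ = 1 := fun x => norm_eq_of_mem_sphere x
  have hqm : Measurable fun x : Metric.sphere (0 : EuclideanSpace ℝ (Fin d)) 1 =>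
      (q (x : EuclideanSpace ℝ (Fin d))).toNNReal :=
    (continuous_real_toNNReal.comp (hq.continuous.comp continuous_subtype_val)).measurable
  have hdens : (fun x : Metric.sphere (0 : EuclideanSpace ℝ (Fin d)) 1 =>
      ENNReal.ofReal (q (x : EuclideanSpace ℝ (Fin d))))
      = fun x : Metric.sphere (0 : EuclideanSpace ℝ (Fin d)) 1 =>
        (((q (x : EuclideanSpace ℝ (Fin d))).toNNReal : ℝ≥0) : ℝ≥0∞) := rfl
  rw [hdens, integral_withDensity_eq_integral_smul hqm]
  have hpt : ∀ x : Metric.sphere (0 : EuclideanSpace ℝ (Fin d)) 1,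
      (q (x : EuclideanSpace ℝ (Fin d))).toNNReal •
        (⟪(gradient (fun y => Real.log (q y)) (x : EuclideanSpace ℝ (Fin d))
            - ⟪gradient (fun y => Real.log (q y)) (x : EuclideanSpace ℝ (Fin d)),
                (x : EuclideanSpace ℝ (Fin d))⟫ • (x : EuclideanSpace ℝ (Fin d)))
            - ((d : ℝ) - 1) • (x : EuclideanSpace ℝ (Fin d)),
          h (x : EuclideanSpace ℝ (Fin d))⟫
        + ∑ i : Fin d,
            ⟪gradient (fun y => h y i) (x : EuclideanSpace ℝ (Fin d))
              - ⟪gradient (fun y => h y i) (x : EuclideanSpace ℝ (Fin d)),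
                  (x : EuclideanSpace ℝ (Fin d))⟫ • (x : EuclideanSpace ℝ (Fin d)),
              EuclideanSpace.single i (1 : ℝ)⟫)
      = ∑ i : Fin d, ∑ j : Fin d,
          ((x : EuclideanSpace ℝ (Fin d)) j
            * fderiv ℝ (fun y => y j * (q y * h y i)) (x : EuclideanSpace ℝ (Fin d))
                (EuclideanSpace.single i (1:ℝ))
          - (x : EuclideanSpace ℝ (Fin d)) i
            * fderiv ℝ (fun y => y j * (q y * h y i)) (x : EuclideanSpace ℝ (Fin d))
                (EuclideanSpace.single j (1:ℝ))) := by
    intro x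
    rw [NNReal.smul_def, Real.coe_toNNReal _ (hqpos _ (hnorm x)).le]
    exact Stmt15Aux.pointwise q h hq hh _ (hnorm x) (hqpos _ (hnorm x))
  rw [show (fun x : Metric.sphere (0 : EuclideanSpace ℝ (Fin d)) 1 =>
      (q (x : EuclideanSpace ℝ (Fin d))).toNNReal • _) = _ from funext hpt]
  have contD : ∀ i j : Fin d,
      Continuous (fun x : Metric.sphere (0 : EuclideanSpace ℝ (Fin d)) 1 =>
        ((x : EuclideanSpace ℝ (Fin d)) j
          * fderiv ℝ (fun y => y j * (q y * h y i)) (x : EuclideanSpace ℝ (Fin d))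
              (EuclideanSpace.single i (1:ℝ))
        - (x : EuclideanSpace ℝ (Fin d)) i
          * fderiv ℝ (fun y => y j * (q y * h y i)) (x : EuclideanSpace ℝ (Fin d))
              (EuclideanSpace.single j (1:ℝ)))) := by
    intro i j
    have hc : Continuous fun x : Metric.sphere (0 : EuclideanSpace ℝ (Fin d)) 1 =>
        fderiv ℝ (fun y => y j * (q y * h y i)) (x : EuclideanSpace ℝ (Fin d)) :=
      ((contDiff_G q h hq hh i j).continuous_fderiv (by simp)).comp continuous_subtype_val
    have hcoord : ∀ k : Fin d, Continuous fun x : Metric.sphere (0 : EuclideanSpace ℝ (Fin d)) 1 =>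
        (x : EuclideanSpace ℝ (Fin d)) k :=
      fun k => (EuclideanSpace.proj (𝕜 := ℝ) k).continuous.comp continuous_subtype_val
    exact ((hcoord j).mul (hc.clm_apply continuous_const)).sub
      ((hcoord i).mul (hc.clm_apply continuous_const))
  rw [integral_finset_sum _
    (fun i _ => continuous_integrable τ (continuous_finset_sum _ fun j _ => contD i j))]
  refine Finset.sum_eq_zero fun i _ => ?_
  rw [integral_finset_sum _ (fun j _ => continuous_integrable τ (contD i j))]
  refine Finset.sum_eq_zero fun j _ => ?_
  by_cases hij : i = j
  · subst hij
    simp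
  · exact integral_D_zero d τ hinv hij (fun y => y j * (q y * h y i)) (contDiff_G q h hq hh i j)
end
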